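/- arXiv:1312.6495 — 4 statements merged into one kernel-verified Lean document; each statement's English description precedes it below -/
import Mathlib

section
/- Let 𝒢 be a set of finite signed measures on a measurable space that is downward closed (ν ∈ 𝒢 and λ ≤ ν implies λ ∈ 𝒢) and closed under lattice suprema of pairs. Suppose for a given measure μ there exists μ* ∈ 𝒢 which is the largest element of 𝒢 below μ. Then for every ν ∈ 𝒢, ‖μ − μ*‖ ≤ ‖μ − ν‖ in total variation, and μ* is the unique element of 𝒢 attaining the minimum of ν ↦ ‖μ − ν‖ over 𝒢. -/
/-!
Let `μ - ν = P - N` be the Jordan decomposition. The signed measure `μ - P` lies below `ν`, hence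
in `𝒢`, and below `μ`, hence below `μ*`. So `0 ≤ μ - μ* ≤ P`, and
`‖μ - μ*‖ = (μ - μ*)(univ) ≤ P(univ) ≤ P(univ) + N(univ) = ‖μ - ν‖`.
Equality forces `N = 0` and `μ - μ* = P`, that is `μ - μ* = μ - ν`.
-/

namespace MeasureTheory

variable {α : Type*} [MeasurableSpace α]

theorem Measure.totalVariation_toSignedMeasure (m : Measure α) [IsFiniteMeasure m] :
    m.toSignedMeasure.totalVariation = m := by
  have h : m.toSignedMeasure.toJordanDecomposition = ⟨m, 0, .zero_right⟩ :=
    SignedMeasure.toJordanDecomposition_eq <| by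
      simp [JordanDecomposition.toSignedMeasure, Measure.toSignedMeasure_zero]
  simp [SignedMeasure.totalVariation, h]

namespace SignedMeasure

theorem exists_toSignedMeasure_eq_of_nonneg {s : SignedMeasure α} (hs : 0 ≤ s) :
    ∃ (m : Measure α) (_ : IsFiniteMeasure m), m.toSignedMeasure = s :=
  ⟨_, inferInstance,
    toMeasureOfZeroLE_toSignedMeasure s ((VectorMeasure.le_restrict_univ_iff_le _ _).2 hs)⟩

theorem le_toSignedMeasure_posPart (s : SignedMeasure α) :
    s ≤ s.toJordanDecomposition.posPart.toSignedMeasure := by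
  conv_lhs => rw [← s.toSignedMeasure_toJordanDecomposition]
  exact sub_le_self _ (Measure.zero_le_toSignedMeasure _)

theorem measure_univ_le_totalVariation_of_le_posPart {m : Measure α} {s : SignedMeasure α}
    (h : m ≤ s.toJordanDecomposition.posPart) : m Set.univ ≤ s.totalVariation Set.univ := by
  rw [totalVariation, Measure.add_apply]
  exact (h Set.univ).trans le_self_add

theorem toSignedMeasure_eq_of_le_posPart_of_measure_univ_eq {m : Measure α} [IsFiniteMeasure m]
    {s : SignedMeasure α} (h : m ≤ s.toJordanDecomposition.posPart)
    (huniv : m Set.univ = s.totalVariation Set.univ) : m.toSignedMeasure = s := by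
  rw [totalVariation, Measure.add_apply] at huniv
  rw [← s.toSignedMeasure_toJordanDecomposition]
  generalize s.toJordanDecomposition = j at h huniv ⊢
  have hN : j.negPart = 0 := Measure.measure_univ_eq_zero.1 <| nonpos_iff_eq_zero.1 <|
    ENNReal.le_of_add_le_add_left (measure_ne_top j.posPart Set.univ) <| by
      rw [add_zero, ← huniv]; exact h Set.univ
  have hP : m = j.posPart := Measure.eq_of_le_of_measure_univ_eq h <| by
    rw [huniv, hN, Measure.coe_zero, Pi.zero_apply, add_zero]
  simp [JordanDecomposition.toSignedMeasure, hP, hN, Measure.toSignedMeasure_zero]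

theorem sub_le_toSignedMeasure_posPart_sub {G : Set (SignedMeasure α)}
    (hdown : ∀ ν ∈ G, ∀ lam : SignedMeasure α, lam ≤ ν → lam ∈ G) {μ μstar : SignedMeasure α}
    (hmax : ∀ ν ∈ G, ν ≤ μ → ν ≤ μstar) {ν : SignedMeasure α} (hν : ν ∈ G) :
    μ - μstar ≤ (μ - ν).toJordanDecomposition.posPart.toSignedMeasure := by
  set P := (μ - ν).toJordanDecomposition.posPart
  have hle_ν : μ - P.toSignedMeasure ≤ ν := by
    simpa using sub_le_sub_left (le_toSignedMeasure_posPart (μ - ν)) μ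
  have hle_μ : μ - P.toSignedMeasure ≤ μ := sub_le_self _ (Measure.zero_le_toSignedMeasure P)
  exact sub_le_comm.1 (hmax _ (hdown ν hν _ hle_ν) hle_μ)

end SignedMeasure

end MeasureTheory

open MeasureTheory

theorem stmt7_general {α : Type*} [MeasurableSpace α] (G : Set (SignedMeasure α))
    (hdown : ∀ ν ∈ G, ∀ lam : SignedMeasure α, lam ≤ ν → lam ∈ G)
    (μ μstar : SignedMeasure α) (hle : μstar ≤ μ)
    (hmax : ∀ ν ∈ G, ν ≤ μ → ν ≤ μstar) :
    (∀ ν ∈ G, (μ - μstar).totalVariation Set.univ ≤ (μ - ν).totalVariation Set.univ) ∧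
    (∀ ν ∈ G, (μ - ν).totalVariation Set.univ = (μ - μstar).totalVariation Set.univ →
      ν = μstar) := by
  obtain ⟨m, _, hm⟩ := SignedMeasure.exists_toSignedMeasure_eq_of_nonneg (sub_nonneg.2 hle)
  have hm_le : ∀ ν ∈ G, m ≤ (μ - ν).toJordanDecomposition.posPart := fun ν hν ↦
    (Measure.toSignedMeasure_le_toSignedMeasure_iff _ _).1 <|
      hm ▸ SignedMeasure.sub_le_toSignedMeasure_posPart_sub hdown hmax hν
  rw [← hm, Measure.totalVariation_toSignedMeasure]
  refine ⟨fun ν hν ↦ SignedMeasure.measure_univ_le_totalVariation_of_le_posPart (hm_le ν hν),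
    fun ν hν heq ↦ ?_⟩
  have h := SignedMeasure.toSignedMeasure_eq_of_le_posPart_of_measure_univ_eq (hm_le ν hν) heq.symm
  exact sub_right_injective (hm ▸ h).symm

/-- If 𝒢 is a downward-closed class of finite signed measures closed under pairwise lattice
suprema and μ* is the largest element of 𝒢 below μ, then μ* is the (unique) best
approximation of μ from 𝒢 in total variation norm. -/
theorem stmt7 {α : Type*} [MeasurableSpace α] (G : Set (SignedMeasure α))
    (hdown : ∀ ν ∈ G, ∀ lam : SignedMeasure α, lam ≤ ν → lam ∈ G)
    (hsup : ∀ μ₁ ∈ G, ∀ μ₂ ∈ G, ∀ σ : SignedMeasure α, IsLUB {μ₁, μ₂} σ → σ ∈ G)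
    (μ μstar : SignedMeasure α) (hmem : μstar ∈ G) (hle : μstar ≤ μ)
    (hmax : ∀ ν ∈ G, ν ≤ μ → ν ≤ μstar) :
    (∀ ν ∈ G, (μ - μstar).totalVariation Set.univ ≤ (μ - ν).totalVariation Set.univ) ∧
    (∀ ν ∈ G, (μ - ν).totalVariation Set.univ = (μ - μstar).totalVariation Set.univ →
      ν = μstar) :=
  stmt7_general G hdown μ μstar hle hmax
end

section
/- Let a_n, b_n, c_n ∈ L¹(Ω) with a_n ≤ b_n ≤ c_n a.e., where Ω ⊂ ℝ^N is a bounded open set. Assume a_n → a, b_n → b, c_n → c a.e. for some a, b, c ∈ L¹(Ω), and that (c_n − a_n) converges to (c − a) in the weak* topology of finite measures on Ω (i.e., ∫(c_n − a_n)φ → ∫(c − a)φ for every φ ∈ C₀(Ω̄)). Then (c_n − b_n) converges to (c − b) weak* in the sense of measures. -/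
/-!
Against a nonnegative test function `φ` this is a generalized dominated convergence theorem:
`0 ≤ (cₙ - bₙ) φ ≤ (cₙ - aₙ) φ`, both sides converge a.e., and the integrals of the dominating
sequence converge. Fatou's lemma applied to `(cₙ - bₙ) φ` and to `(bₙ - aₙ) φ` bounds the
integrals of `(cₙ - bₙ) φ` from below and, since the two sum to the convergent integrals of
`(cₙ - aₙ) φ`, from above. A general test function is split as `φ = φ⁺ - φ⁻`.
-/

open MeasureTheory Filter Topology

theorem tendsto_of_forall_lt_eventually_lt_of_tendsto_add {ι : Type*} {l : Filter ι}
    {x y : ι → ℝ} {s t : ℝ} (hx : ∀ b < s, ∀ᶠ i in l, b < x i) (hy : ∀ b < t, ∀ᶠ i in l, b < y i)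
    (hxy : Tendsto (fun i => x i + y i) l (𝓝 (s + t))) :
    Tendsto x l (𝓝 s) := by
  refine tendsto_order.2 ⟨hx, fun b hb => ?_⟩
  filter_upwards [hy (t - (b - s) / 2) (by linarith),
    (tendsto_order.1 hxy).2 (s + t + (b - s) / 2) (by linarith)] with i hyi hxyi
  linarith

section Fatou

variable {α : Type*} [MeasurableSpace α] {μ : Measure α}

/-- Fatou's lemma for real integrals, stated without `liminf`: on `ℝ` the `liminf` of a sequence
that is not bounded above is a junk value. -/
theorem eventually_lt_integral_of_tendsto_of_nonneg {f : ℕ → α → ℝ} {F : α → ℝ}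
    (hf : ∀ n, Integrable (f n) μ) (hF : Integrable F μ) (hf_nonneg : ∀ n, 0 ≤ᵐ[μ] f n)
    (hlim : ∀ᵐ x ∂μ, Tendsto (fun n => f n x) atTop (𝓝 (F x)))
    {b : ℝ} (hb : b < ∫ x, F x ∂μ) :
    ∀ᶠ n in atTop, b < ∫ x, f n x ∂μ := by
  rcases lt_or_ge b 0 with hb0 | hb0
  · exact Eventually.of_forall fun n => hb0.trans_le (integral_nonneg_of_ae (hf_nonneg n))
  have hF_nonneg : 0 ≤ᵐ[μ] F := by
    filter_upwards [ae_all_iff.2 hf_nonneg, hlim] with x hfx hx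
    exact ge_of_tendsto' hx hfx
  have fatou : ENNReal.ofReal (∫ x, F x ∂μ) ≤
      liminf (fun n => ENNReal.ofReal (∫ x, f n x ∂μ)) atTop := by
    simp_rw [ofReal_integral_eq_lintegral_ofReal hF hF_nonneg,
      ofReal_integral_eq_lintegral_ofReal (hf _) (hf_nonneg _)]
    calc ∫⁻ x, ENNReal.ofReal (F x) ∂μ
        = ∫⁻ x, liminf (fun n => ENNReal.ofReal (f n x)) atTop ∂μ := by
          refine lintegral_congr_ae ?_
          filter_upwards [hlim] with x hx
          exact ((ENNReal.continuous_ofReal.tendsto _).comp hx).liminf_eq.symm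
      _ ≤ _ := lintegral_liminf_le' fun n => (hf n).aemeasurable.ennreal_ofReal
  have hlt : ENNReal.ofReal b < liminf (fun n => ENNReal.ofReal (∫ x, f n x ∂μ)) atTop :=
    ((ENNReal.ofReal_lt_ofReal_iff (hb0.trans_lt hb)).2 hb).trans_le fatou
  filter_upwards [eventually_lt_of_lt_liminf hlt] with n hn
  exact (ENNReal.ofReal_lt_ofReal_iff'.1 hn).1

theorem tendsto_integral_of_tendsto_of_nonneg_of_le {f g : ℕ → α → ℝ} {F G : α → ℝ}
    (hf : ∀ n, Integrable (f n) μ) (hg : ∀ n, Integrable (g n) μ)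
    (hF : Integrable F μ) (hG : Integrable G μ)
    (hf_nonneg : ∀ n, 0 ≤ᵐ[μ] f n) (hfg : ∀ n, f n ≤ᵐ[μ] g n)
    (hf_lim : ∀ᵐ x ∂μ, Tendsto (fun n => f n x) atTop (𝓝 (F x)))
    (hg_lim : ∀ᵐ x ∂μ, Tendsto (fun n => g n x) atTop (𝓝 (G x)))
    (hg_int : Tendsto (fun n => ∫ x, g n x ∂μ) atTop (𝓝 (∫ x, G x ∂μ))) :
    Tendsto (fun n => ∫ x, f n x ∂μ) atTop (𝓝 (∫ x, F x ∂μ)) := by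
  refine tendsto_of_forall_lt_eventually_lt_of_tendsto_add
    (y := fun n => ∫ x, (g n x - f n x) ∂μ) (t := ∫ x, (G x - F x) ∂μ)
    (fun b hb => eventually_lt_integral_of_tendsto_of_nonneg hf hF hf_nonneg hf_lim hb)
    (fun b hb => eventually_lt_integral_of_tendsto_of_nonneg (fun n => (hg n).sub (hf n))
      (hG.sub hF) (fun n => by filter_upwards [hfg n] with x hx using sub_nonneg.2 hx)
      (by filter_upwards [hf_lim, hg_lim] with x hfx hgx using hgx.sub hfx) hb) ?_
  simp_rw [integral_sub (hg _) (hf _), integral_sub hG hF, add_sub_cancel]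
  exact hg_int

end Fatou

section TestFunction

variable {α : Type*} [MeasurableSpace α] {μ : Measure α} {s : Set α}

theorem setIntegral_mul_eq_sub_posPart_negPart {f φ : α → ℝ}
    (hpos : IntegrableOn (fun x => f x * φ⁺ x) s μ)
    (hneg : IntegrableOn (fun x => f x * φ⁻ x) s μ) :
    ∫ x in s, f x * φ x ∂μ = ∫ x in s, f x * φ⁺ x ∂μ - ∫ x in s, f x * φ⁻ x ∂μ := by
  have hφ (x : α) : φ⁺ x - φ⁻ x = φ x := by rw [← Pi.sub_apply, posPart_sub_negPart]
  simp_rw [← integral_sub hpos hneg, ← mul_sub, hφ]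

theorem tendsto_setIntegral_mul_of_posPart_of_negPart {ι : Type*} {l : Filter ι}
    {u : ι → α → ℝ} {v φ : α → ℝ}
    (hu_pos : ∀ i, IntegrableOn (fun x => u i x * φ⁺ x) s μ)
    (hu_neg : ∀ i, IntegrableOn (fun x => u i x * φ⁻ x) s μ)
    (hv_pos : IntegrableOn (fun x => v x * φ⁺ x) s μ)
    (hv_neg : IntegrableOn (fun x => v x * φ⁻ x) s μ)
    (h_pos : Tendsto (fun i => ∫ x in s, u i x * φ⁺ x ∂μ) l (𝓝 (∫ x in s, v x * φ⁺ x ∂μ)))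
    (h_neg : Tendsto (fun i => ∫ x in s, u i x * φ⁻ x ∂μ) l (𝓝 (∫ x in s, v x * φ⁻ x ∂μ))) :
    Tendsto (fun i => ∫ x in s, u i x * φ x ∂μ) l (𝓝 (∫ x in s, v x * φ x ∂μ)) := by
  rw [setIntegral_mul_eq_sub_posPart_negPart hv_pos hv_neg]
  simpa only [setIntegral_mul_eq_sub_posPart_negPart (hu_pos _) (hu_neg _)] using h_pos.sub h_neg

end TestFunction

/-- Sandwich lemma for weak* convergence: if a_n ≤ b_n ≤ c_n a.e., all converge a.e. and
(c_n − a_n) ⇀ (c − a) weak* in the sense of measures (tested against C₀(Ω̄)), then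
(c_n − b_n) ⇀ (c − b) weak* in the sense of measures. -/
theorem stmt8 (N : ℕ) (Ω : Set (Fin N → ℝ)) (hΩ : IsOpen Ω)
    (hbd : Bornology.IsBounded Ω)
    (a b c : (Fin N → ℝ) → ℝ) (an bn cn : ℕ → (Fin N → ℝ) → ℝ)
    (hai : ∀ n, IntegrableOn (an n) Ω) (hbi : ∀ n, IntegrableOn (bn n) Ω)
    (hci : ∀ n, IntegrableOn (cn n) Ω)
    (ha : IntegrableOn a Ω) (hb : IntegrableOn b Ω) (hc : IntegrableOn c Ω)
    (hord : ∀ n, ∀ᵐ x ∂(volume.restrict Ω), an n x ≤ bn n x ∧ bn n x ≤ cn n x)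
    (hconva : ∀ᵐ x ∂(volume.restrict Ω), Tendsto (fun n => an n x) atTop (nhds (a x)))
    (hconvb : ∀ᵐ x ∂(volume.restrict Ω), Tendsto (fun n => bn n x) atTop (nhds (b x)))
    (hconvc : ∀ᵐ x ∂(volume.restrict Ω), Tendsto (fun n => cn n x) atTop (nhds (c x)))
    (hweak : ∀ φ : (Fin N → ℝ) → ℝ, Continuous φ → (∀ x ∈ frontier Ω, φ x = 0) →
      Tendsto (fun n => ∫ x in Ω, (cn n x - an n x) * φ x) atTop
        (nhds (∫ x in Ω, (c x - a x) * φ x))) :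
    ∀ φ : (Fin N → ℝ) → ℝ, Continuous φ → (∀ x ∈ frontier Ω, φ x = 0) →
      Tendsto (fun n => ∫ x in Ω, (cn n x - bn n x) * φ x) atTop
        (nhds (∫ x in Ω, (c x - b x) * φ x)) := by
  have hint {f ψ : (Fin N → ℝ) → ℝ} (hf : IntegrableOn f Ω) (hψ : Continuous ψ) :
      IntegrableOn (fun x => f x * ψ x) Ω :=
    hf.mul_continuousOn_of_subset hψ.continuousOn hΩ.measurableSet hbd.isCompact_closure
      subset_closure
  have hnonneg (ψ : (Fin N → ℝ) → ℝ) (hψ : Continuous ψ) (hψ_bdry : ∀ x ∈ frontier Ω, ψ x = 0)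
      (hψ_nonneg : 0 ≤ ψ) :
      Tendsto (fun n => ∫ x in Ω, (cn n x - bn n x) * ψ x) atTop
        (𝓝 (∫ x in Ω, (c x - b x) * ψ x)) := by
    refine tendsto_integral_of_tendsto_of_nonneg_of_le
      (fun n => hint ((hci n).sub (hbi n)) hψ) (fun n => hint ((hci n).sub (hai n)) hψ)
      (hint (hc.sub hb) hψ) (hint (hc.sub ha) hψ) (fun n => ?_) (fun n => ?_) ?_ ?_
      (hweak ψ hψ hψ_bdry)
    · filter_upwards [hord n] with x hx
      exact mul_nonneg (sub_nonneg.2 hx.2) (hψ_nonneg x)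
    · filter_upwards [hord n] with x hx
      exact mul_le_mul_of_nonneg_right (sub_le_sub_left hx.1 _) (hψ_nonneg x)
    · filter_upwards [hconvb, hconvc] with x hbx hcx
      exact (hcx.sub hbx).mul_const _
    · filter_upwards [hconva, hconvc] with x hax hcx
      exact (hcx.sub hax).mul_const _
  intro φ hφ hφ_bdry
  have hφ_pos : Continuous φ⁺ := hφ.sup continuous_const
  have hφ_neg : Continuous φ⁻ := hφ.neg.sup continuous_const
  exact tendsto_setIntegral_mul_of_posPart_of_negPart
    (fun n => hint ((hci n).sub (hbi n)) hφ_pos) (fun n => hint ((hci n).sub (hbi n)) hφ_neg)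
    (hint (hc.sub hb) hφ_pos) (hint (hc.sub hb) hφ_neg)
    (hnonneg φ⁺ hφ_pos (fun x hx => by simp [hφ_bdry x hx]) (posPart_nonneg φ))
    (hnonneg φ⁻ hφ_neg (fun x hx => by simp [hφ_bdry x hx]) (negPart_nonneg φ))
end

section
/- Abstract lattice consequence: let 𝒢 be a downward-closed subset of an ordered vector space (lattice) of signed measures containing all measures ≤ 0, closed under pairwise suprema, and suppose every μ has a largest element μ* of 𝒢 below it. Then for all μ, ν: (inf{μ, ν})* = inf{μ*, ν*} and (sup{μ, ν})* = sup{μ*, ν*}. -/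
/-!
The reduction `μ ↦ μ*` is monotone, so `(μ ⊓ ν)* ≤ μ* ⊓ ν*`; conversely `μ* ⊓ ν*` lies in the
down-set `𝒢` and below `μ ⊓ ν`, hence below `(μ ⊓ ν)*`. This part is pure order theory. For the
supremum, a Hahn set `E` of `μ - ν` splits `μ ⊔ ν` into `μ` on `E` and `ν` on `Eᶜ`, and
localization of the reduction turns this into `(μ ⊔ ν)* = μ*|_E + ν*|_{Eᶜ} ≤ μ* ⊔ ν*`; the reverse
inequality is again monotonicity.
-/

open MeasureTheory

theorem mem_lowerBounds_pair {β : Type*} [Preorder β] {a b x : β} :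
    x ∈ lowerBounds {a, b} ↔ x ≤ a ∧ x ≤ b := by
  simp only [lowerBounds_insert, lowerBounds_singleton, Set.mem_inter_iff, Set.mem_Iic]

theorem mem_upperBounds_pair {β : Type*} [Preorder β] {a b x : β} :
    x ∈ upperBounds {a, b} ↔ a ≤ x ∧ b ≤ x := by
  simp only [upperBounds_insert, upperBounds_singleton, Set.mem_inter_iff, Set.mem_Ici]

section Reduction

variable {β : Type*} [PartialOrder β] {G : Set β} {star : β → β}

theorem monotone_of_isGreatest_inter_Iic (hstar : ∀ μ, IsGreatest (G ∩ Set.Iic μ) (star μ)) :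
    Monotone star := fun _ ν hμν =>
  (hstar ν).2 ⟨(hstar _).1.1, (hstar _).1.2.trans hμν⟩

theorem isGLB_pair_of_isGreatest_inter_Iic (hG : IsLowerSet G)
    (hstar : ∀ μ, IsGreatest (G ∩ Set.Iic μ) (star μ)) {μ ν ι : β} (hι : IsGLB {μ, ν} ι) :
    IsGLB {star μ, star ν} (star ι) := by
  have hmono := monotone_of_isGreatest_inter_Iic hstar
  obtain ⟨hιμ, hιν⟩ := mem_lowerBounds_pair.1 hι.1
  refine ⟨mem_lowerBounds_pair.2 ⟨hmono hιμ, hmono hιν⟩, fun κ hκ => ?_⟩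
  obtain ⟨hκμ, hκν⟩ := mem_lowerBounds_pair.1 hκ
  have hκι : κ ≤ ι :=
    hι.2 (mem_lowerBounds_pair.2 ⟨hκμ.trans (hstar μ).1.2, hκν.trans (hstar ν).1.2⟩)
  exact (hstar ι).2 ⟨hG hκμ (hstar μ).1.1, hκι⟩

theorem le_of_isLUB_pair_of_isGreatest_inter_Iic
    (hstar : ∀ μ, IsGreatest (G ∩ Set.Iic μ) (star μ)) {μ ν σ τ : β}
    (hσ : σ ∈ upperBounds {μ, ν}) (hτ : IsLUB {star μ, star ν} τ) : τ ≤ star σ := by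
  have hmono := monotone_of_isGreatest_inter_Iic hstar
  obtain ⟨hμσ, hνσ⟩ := mem_upperBounds_pair.1 hσ
  exact hτ.2 (mem_upperBounds_pair.2 ⟨hmono hμσ, hmono hνσ⟩)

end Reduction

namespace MeasureTheory.VectorMeasure

variable {α M : Type*} [MeasurableSpace α] [TopologicalSpace M] [AddCommMonoid M]

theorem restrict_mono [PartialOrder M] {v w : VectorMeasure α M} (h : v ≤ w) (E : Set α) :
    v.restrict E ≤ w.restrict E := by
  by_cases hE : MeasurableSet E
  · intro i hi
    rw [restrict_apply _ hE hi, restrict_apply _ hE hi]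
    exact h _ (hi.inter hE)
  · rw [restrict_not_measurable _ hE, restrict_not_measurable _ hE]

theorem restrict_add_restrict_compl_restrict [ContinuousAdd M] {v w : VectorMeasure α M}
    {E : Set α} (hE : MeasurableSet E) :
    (v.restrict E + w.restrict Eᶜ).restrict E = v.restrict E ∧
      (v.restrict E + w.restrict Eᶜ).restrict Eᶜ = w.restrict Eᶜ := by
  simp [restrict_restrict, hE, hE.compl]

end MeasureTheory.VectorMeasure

namespace MeasureTheory.SignedMeasure

open VectorMeasure

variable {α : Type*} [MeasurableSpace α]

theorem exists_restrict_eq_of_isLUB_pair {μ ν σ : SignedMeasure α} (hσ : IsLUB {μ, ν} σ) :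
    ∃ E, MeasurableSet E ∧ σ.restrict E = μ.restrict E ∧ σ.restrict Eᶜ = ν.restrict Eᶜ := by
  obtain ⟨E, hE, hpos, hneg⟩ := (μ - ν).exists_compl_positive_negative
  rw [restrict_sub, restrict_zero, sub_nonneg] at hpos
  rw [restrict_sub, restrict_zero, sub_nonpos] at hneg
  obtain ⟨hμσ, hνσ⟩ := mem_upperBounds_pair.1 hσ.1
  set σ₀ := μ.restrict E + ν.restrict Eᶜ
  have hσσ₀ : σ ≤ σ₀ := by
    refine hσ.2 (mem_upperBounds_pair.2 ⟨?_, ?_⟩)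
    · calc μ = μ.restrict E + μ.restrict Eᶜ := (restrict_add_restrict_compl hE).symm
        _ ≤ σ₀ := add_le_add le_rfl hneg
    · calc ν = ν.restrict E + ν.restrict Eᶜ := (restrict_add_restrict_compl hE).symm
        _ ≤ σ₀ := add_le_add hpos le_rfl
  obtain ⟨hσ₀E, hσ₀Ec⟩ := restrict_add_restrict_compl_restrict (v := μ) (w := ν) hE
  refine ⟨E, hE, le_antisymm ?_ (restrict_mono hμσ E),
    le_antisymm ?_ (restrict_mono hνσ Eᶜ)⟩
  · exact hσ₀E ▸ restrict_mono hσσ₀ E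
  · exact hσ₀Ec ▸ restrict_mono hσσ₀ Eᶜ

theorem star_le_of_restrict_eq_of_restrict_compl_eq {star : SignedMeasure α → SignedMeasure α}
    (hrestrict : ∀ (μ : SignedMeasure α) (E : Set α), MeasurableSet E →
      star (μ.restrict E) = (star μ).restrict E)
    {μ ν σ τ : SignedMeasure α} {E : Set α} (hE : MeasurableSet E)
    (hσE : σ.restrict E = μ.restrict E) (hσEc : σ.restrict Eᶜ = ν.restrict Eᶜ)
    (hμτ : star μ ≤ τ) (hντ : star ν ≤ τ) : star σ ≤ τ :=
  calc star σ = (star σ).restrict E + (star σ).restrict Eᶜ :=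
        (restrict_add_restrict_compl hE).symm
    _ = (star μ).restrict E + (star ν).restrict Eᶜ := by
        rw [← hrestrict σ E hE, ← hrestrict σ Eᶜ hE.compl, hσE, hσEc, hrestrict μ E hE,
          hrestrict ν Eᶜ hE.compl]
    _ ≤ τ.restrict E + τ.restrict Eᶜ := add_le_add (restrict_mono hμτ E) (restrict_mono hντ Eᶜ)
    _ = τ := restrict_add_restrict_compl hE

end MeasureTheory.SignedMeasure

theorem stmt16_general {α : Type*} [MeasurableSpace α] (G : Set (SignedMeasure α))
    (hdown : ∀ ν ∈ G, ∀ lam : SignedMeasure α, lam ≤ ν → lam ∈ G)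
    (star : SignedMeasure α → SignedMeasure α)
    (hstar : ∀ μ, star μ ∈ G ∧ star μ ≤ μ ∧ ∀ ν ∈ G, ν ≤ μ → ν ≤ star μ)
    (hrestrict : ∀ (μ : SignedMeasure α) (E : Set α), MeasurableSet E →
      star (μ.restrict E) = (star μ).restrict E)
    (μ ν : SignedMeasure α) :
    (∀ ι κ : SignedMeasure α, IsGLB {μ, ν} ι → IsGLB {star μ, star ν} κ → star ι = κ) ∧
    (∀ σ τ : SignedMeasure α, IsLUB {μ, ν} σ → IsLUB {star μ, star ν} τ → star σ = τ) := by
  have hG : IsLowerSet G := fun _ _ hle hmem => hdown _ hmem _ hle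
  have hgreatest : ∀ μ, IsGreatest (G ∩ Set.Iic μ) (star μ) :=
    fun μ => ⟨⟨(hstar μ).1, (hstar μ).2.1⟩, fun ν hν => (hstar μ).2.2 ν hν.1 hν.2⟩
  refine ⟨fun ι κ hι hκ => (isGLB_pair_of_isGreatest_inter_Iic hG hgreatest hι).unique hκ,
    fun σ τ hσ hτ => le_antisymm ?_ (le_of_isLUB_pair_of_isGreatest_inter_Iic hgreatest hσ.1 hτ)⟩
  obtain ⟨E, hE, hσE, hσEc⟩ := SignedMeasure.exists_restrict_eq_of_isLUB_pair hσ
  obtain ⟨hμτ, hντ⟩ := mem_upperBounds_pair.1 hτ.1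
  exact SignedMeasure.star_le_of_restrict_eq_of_restrict_compl_eq hrestrict hE hσE hσEc hμτ hντ

/-- If 𝒢 is a downward-closed class of signed measures containing all nonpositive measures,
closed under pairwise lattice suprema, each μ has a largest element μ* of 𝒢 below it, and
the reduction commutes with restriction, then (inf{μ,ν})* = inf{μ*,ν*} and
(sup{μ,ν})* = sup{μ*,ν*}. -/
theorem stmt16 {α : Type*} [MeasurableSpace α] (G : Set (SignedMeasure α))
    (hneg : ∀ ν : SignedMeasure α, ν ≤ 0 → ν ∈ G)
    (hdown : ∀ ν ∈ G, ∀ lam : SignedMeasure α, lam ≤ ν → lam ∈ G)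
    (hsup : ∀ μ₁ ∈ G, ∀ μ₂ ∈ G, ∀ σ : SignedMeasure α, IsLUB {μ₁, μ₂} σ → σ ∈ G)
    (star : SignedMeasure α → SignedMeasure α)
    (hstar : ∀ μ, star μ ∈ G ∧ star μ ≤ μ ∧ ∀ ν ∈ G, ν ≤ μ → ν ≤ star μ)
    (hrestrict : ∀ (μ : SignedMeasure α) (E : Set α), MeasurableSet E →
      star (μ.restrict E) = (star μ).restrict E)
    (μ ν : SignedMeasure α) :
    (∀ ι κ : SignedMeasure α, IsGLB {μ, ν} ι → IsGLB {star μ, star ν} κ → star ι = κ) ∧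
    (∀ σ τ : SignedMeasure α, IsLUB {μ, ν} σ → IsLUB {star μ, star ν} τ → star σ = τ) :=
  stmt16_general G hdown star hstar hrestrict μ ν
end

section
/- Let μ ↦ μ* be an order-preserving map on finite signed measures satisfying μ* ≤ μ, (μ − μ*) is always ≥ 0, and the subadditivity-type property: ν ≤ μ implies μ − μ* ≥ ν − ν* whenever additionally (sup{μ,ν})* = sup{μ*, ν*} holds in general. Then (μ* − ν*)⁺ ≤ (μ − ν)⁺ for all μ, ν; in particular |μ* − ν*| ≤ |μ − ν| and μ ≤ ν implies μ* ≤ ν*. -/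
/-!
In the lattice of finite signed measures `sup {μ, ν} = ν + (μ - ν)⁺`. Writing `σ` for this
supremum, commutation with suprema gives `σ* = ν* + (μ* - ν*)⁺`, so the monotone step applied to
`ν ≤ σ` reads `(μ* - ν*)⁺ = σ* - ν* ≤ σ - ν = (μ - ν)⁺`. Swapping `μ` and `ν` bounds the negative
parts as well, and `μ ≤ ν` means exactly `(μ - ν)⁺ = 0`.
-/

open MeasureTheory

namespace MeasureTheory.SignedMeasure

variable {α : Type*} [MeasurableSpace α]

noncomputable def positivePart (s : SignedMeasure α) : SignedMeasure α :=
  s.toJordanDecomposition.posPart.toSignedMeasure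

lemma zero_le_positivePart (s : SignedMeasure α) : 0 ≤ s.positivePart :=
  Measure.zero_le_toSignedMeasure _

lemma le_positivePart (s : SignedMeasure α) : s ≤ s.positivePart := by
  conv_lhs => rw [← s.toSignedMeasure_toJordanDecomposition]
  exact sub_le_self _ (Measure.zero_le_toSignedMeasure _)

lemma exists_positivePart_apply_eq_inter (s : SignedMeasure α) :
    ∃ i, MeasurableSet i ∧ ∀ E, MeasurableSet E → s.positivePart E = s (i ∩ E) := by
  obtain ⟨i, hi, hi_pos, -, hpos, -⟩ := s.toJordanDecomposition_spec
  refine ⟨i, hi, fun E hE => ?_⟩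
  rw [positivePart, Measure.toSignedMeasure_apply_measurable hE, hpos,
    toMeasureOfZeroLE_real_apply s hi_pos hi hE]

lemma positivePart_le {s ρ : SignedMeasure α} (h : s ≤ ρ) (hρ : 0 ≤ ρ) :
    s.positivePart ≤ ρ := by
  obtain ⟨i, hi, happly⟩ := s.exists_positivePart_apply_eq_inter
  intro E hE
  have hρ_diff : 0 ≤ ρ (E \ (i ∩ E)) := by simpa using hρ _ (hE.diff (hi.inter hE))
  calc s.positivePart E = s (i ∩ E) := happly E hE
    _ ≤ ρ (i ∩ E) := h _ (hi.inter hE)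
    _ ≤ ρ (i ∩ E) + ρ (E \ (i ∩ E)) := le_add_of_nonneg_right hρ_diff
    _ = ρ E := VectorMeasure.of_add_of_sdiff (hi.inter hE) hE Set.inter_subset_right

lemma positivePart_nonpos_iff {s : SignedMeasure α} : s.positivePart ≤ 0 ↔ s ≤ 0 :=
  ⟨s.le_positivePart.trans, fun h => positivePart_le h le_rfl⟩

lemma isLUB_pair_eq_add_positivePart_sub (μ ν : SignedMeasure α) :
    IsLUB {μ, ν} (ν + (μ - ν).positivePart) := by
  refine ⟨?_, fun c hc => ?_⟩
  · rintro x (rfl | rfl)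
    · exact sub_le_iff_le_add'.1 (le_positivePart _)
    · exact le_add_of_nonneg_right (zero_le_positivePart _)
  · have hμ : μ ≤ c := hc (Set.mem_insert _ _)
    have hν : ν ≤ c := hc (Set.mem_insert_of_mem _ rfl)
    exact le_sub_iff_add_le'.1 (positivePart_le (sub_le_sub_right hμ ν) (sub_nonneg.2 hν))

lemma positivePart_sub_le_of_isLUB_comm (star : SignedMeasure α → SignedMeasure α)
    (hstep : ∀ μ ν : SignedMeasure α, ν ≤ μ → ν - star ν ≤ μ - star μ)
    (hsupcomm : ∀ μ ν σ τ : SignedMeasure α, IsLUB {μ, ν} σ →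
      IsLUB {star μ, star ν} τ → star σ = τ)
    (μ ν : SignedMeasure α) :
    (star μ - star ν).positivePart ≤ (μ - ν).positivePart := by
  set σ := ν + (μ - ν).positivePart
  have hσ : IsLUB {μ, ν} σ := isLUB_pair_eq_add_positivePart_sub μ ν
  have hstar_σ : star σ = star ν + (star μ - star ν).positivePart :=
    hsupcomm μ ν σ _ hσ (isLUB_pair_eq_add_positivePart_sub _ _)
  have h := hstep σ ν (hσ.1 (Set.mem_insert_of_mem _ rfl))
  rw [sub_le_sub_iff, add_comm] at h
  calc (star μ - star ν).positivePart = star σ - star ν := by rw [hstar_σ]; abel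
    _ ≤ σ - ν := sub_le_sub_iff.2 h
    _ = (μ - ν).positivePart := add_sub_cancel_left _ _

lemma toJordanDecomposition_posPart_le_iff {s t : SignedMeasure α} :
    s.toJordanDecomposition.posPart ≤ t.toJordanDecomposition.posPart ↔
      s.positivePart ≤ t.positivePart :=
  (Measure.toSignedMeasure_le_toSignedMeasure_iff _ _).symm

lemma toJordanDecomposition_negPart_sub (μ ν : SignedMeasure α) :
    (μ - ν).toJordanDecomposition.negPart = (ν - μ).toJordanDecomposition.posPart := by
  rw [← neg_sub, toJordanDecomposition_neg, JordanDecomposition.neg_negPart]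

end MeasureTheory.SignedMeasure

open SignedMeasure in
theorem stmt17_general {α : Type*} [MeasurableSpace α]
    (star : SignedMeasure α → SignedMeasure α)
    (hstep : ∀ μ ν : SignedMeasure α, ν ≤ μ → ν - star ν ≤ μ - star μ)
    (hsupcomm : ∀ μ ν σ τ : SignedMeasure α, IsLUB {μ, ν} σ →
      IsLUB {star μ, star ν} τ → star σ = τ)
    (μ ν : SignedMeasure α) :
    (star μ - star ν).toJordanDecomposition.posPart
      ≤ (μ - ν).toJordanDecomposition.posPart ∧
    (star μ - star ν).totalVariation ≤ (μ - ν).totalVariation ∧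
    (μ ≤ ν → star μ ≤ star ν) := by
  have key := positivePart_sub_le_of_isLUB_comm star hstep hsupcomm
  refine ⟨toJordanDecomposition_posPart_le_iff.2 (key μ ν), ?_, fun h => ?_⟩
  · rw [totalVariation, totalVariation, toJordanDecomposition_negPart_sub,
      toJordanDecomposition_negPart_sub]
    exact add_le_add (toJordanDecomposition_posPart_le_iff.2 (key μ ν))
      (toJordanDecomposition_posPart_le_iff.2 (key ν μ))
  · have hμν : (μ - ν).positivePart ≤ 0 := positivePart_nonpos_iff.2 (sub_nonpos.2 h)
    exact sub_nonpos.1 (positivePart_nonpos_iff.1 ((key μ ν).trans hμν))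

/-- If μ ↦ μ* is order preserving, satisfies μ* ≤ μ, the monotone step
(ν ≤ μ ⟹ ν − ν* ≤ μ − μ*) and commutes with pairwise lattice suprema, then it is
non-expansive: (μ* − ν*)⁺ ≤ (μ − ν)⁺; in particular |μ* − ν*| ≤ |μ − ν| and
μ ≤ ν ⟹ μ* ≤ ν*. -/
theorem stmt17 {α : Type*} [MeasurableSpace α]
    (star : SignedMeasure α → SignedMeasure α)
    (hmono : Monotone star)
    (hle : ∀ μ, star μ ≤ μ)
    (hstep : ∀ μ ν : SignedMeasure α, ν ≤ μ → ν - star ν ≤ μ - star μ)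
    (hsupcomm : ∀ μ ν σ τ : SignedMeasure α, IsLUB {μ, ν} σ →
      IsLUB {star μ, star ν} τ → star σ = τ)
    (μ ν : SignedMeasure α) :
    (star μ - star ν).toJordanDecomposition.posPart
      ≤ (μ - ν).toJordanDecomposition.posPart ∧
    (star μ - star ν).totalVariation ≤ (μ - ν).totalVariation ∧
    (μ ≤ ν → star μ ≤ star ν) :=
  stmt17_general star hstep hsupcomm μ ν
end
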